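/- Let γ>1 and let U=(u,0,p,ρ) with ρ>0, p>0, u>c where c=√(γp/ρ), and let σ satisfy λ₁(U) < σ < 0 where λ₁(U) = −c/√(u²−c²). Set A := DH(U) − σ·DW(U). Then det( A·r̃₄(U), A·r₃(U), A·r₂(U), A·r̃₁(U) ) > 0, where r̃_j(U) = (−λ_j(U), 1, ρ·λ_j(U)·u, ρ·λ_j(U)·u/c²) for j=1,4 (with λ₄(U) = c/√(u²−c²)), r₂(U)=(u,0,0,0), and r₃(U)=(0,0,0,ρ). -/

import Mathlib

/-!
The matrix with columns `A r̃₄, A r₃, A r₂, A r̃₁` is `A R`, where `R` has columns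
`r̃₄, r₃, r₂, r̃₁`, so its determinant is `det A * det R`. At a state with `v = 0` one finds
`det R = 2 ρ² λ₄ u²` and `det A = ρ u² σ² (γ p - (ρ u² - γ p) σ²) / (γ - 1)`.
As `λ₄² (u² - c²) = c²` and `ρ c² = γ p`, the last factor is `ρ (u² - c²) (λ₄² - σ²)`,
positive because `λ₁ = -λ₄ < σ < 0`.
-/

noncomputable section

/-- The flux map `W` of the 2-D steady full Euler system,
with state `U = (u, v, p, ρ)`. -/
def Wf (γ : ℝ) (U : Fin 4 → ℝ) : Fin 4 → ℝ :=
  ![U 3 * U 0,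
    U 3 * U 0 ^ 2 + U 2,
    U 3 * U 0 * U 1,
    U 3 * U 0 * (γ * U 2 / ((γ - 1) * U 3) + (U 0 ^ 2 + U 1 ^ 2) / 2)]

/-- The flux map `H` of the 2-D steady full Euler system. -/
def Hf (γ : ℝ) (U : Fin 4 → ℝ) : Fin 4 → ℝ :=
  ![U 3 * U 1,
    U 3 * U 0 * U 1,
    U 3 * U 1 ^ 2 + U 2,
    U 3 * U 1 * (γ * U 2 / ((γ - 1) * U 3) + (U 0 ^ 2 + U 1 ^ 2) / 2)]

/-- Jacobian matrix of `W` with respect to `(u, v, p, ρ)`. -/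
def DW (γ : ℝ) (U : Fin 4 → ℝ) : Matrix (Fin 4) (Fin 4) ℝ :=
  Matrix.of fun i j => fderiv ℝ (fun V => Wf γ V i) U (Pi.single j 1)

/-- Jacobian matrix of `H` with respect to `(u, v, p, ρ)`. -/
def DH (γ : ℝ) (U : Fin 4 → ℝ) : Matrix (Fin 4) (Fin 4) ℝ :=
  Matrix.of fun i j => fderiv ℝ (fun V => Hf γ V i) U (Pi.single j 1)

/-- The 4×4 matrix whose columns are the listed vectors. -/
def colMat (a b c d : Fin 4 → ℝ) : Matrix (Fin 4) (Fin 4) ℝ :=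
  Matrix.of fun i j => ![a, b, c, d] j i

open Matrix Filter Topology

theorem colMat_mulVec (A : Matrix (Fin 4) (Fin 4) ℝ) (a b c d : Fin 4 → ℝ) :
    colMat (A *ᵥ a) (A *ᵥ b) (A *ᵥ c) (A *ᵥ d) = A * colMat a b c d := by
  ext i j
  fin_cases j <;> simp [colMat, mul_apply, mulVec, dotProduct]

theorem fderiv_eval {ι : Type*} [Fintype ι] (i : ι) (x : ι → ℝ) :
    fderiv ℝ (fun y : ι → ℝ => y i) x = ContinuousLinearMap.proj i :=
  (hasFDerivAt_apply i x).fderiv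

section Jacobians

variable {γ u v p ρ : ℝ}

/- Since `ρ h = γ p / (γ - 1)`, the energy fluxes are polynomial near any state with `ρ ≠ 0`,
so their Jacobians need only the product rule. -/
theorem Wf_three_eventuallyEq (hγ : γ ≠ 1) (hρ : ρ ≠ 0) :
    (fun V => Wf γ V 3) =ᶠ[𝓝 ![u, v, p, ρ]]
      fun V => γ / (γ - 1) * (V 0 * V 2) + V 3 * V 0 * (V 0 ^ 2 + V 1 ^ 2) / 2 := by
  have hρ_near : ∀ᶠ V in 𝓝 (![u, v, p, ρ] : Fin 4 → ℝ), V 3 ≠ 0 :=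
    (continuous_apply 3).continuousAt.eventually_ne hρ
  filter_upwards [hρ_near] with V hV
  have hγ1 : γ - 1 ≠ 0 := sub_ne_zero.mpr hγ
  simp only [Wf, Matrix.cons_val]
  field_simp

theorem Hf_three_eventuallyEq (hγ : γ ≠ 1) (hρ : ρ ≠ 0) :
    (fun V => Hf γ V 3) =ᶠ[𝓝 ![u, v, p, ρ]]
      fun V => γ / (γ - 1) * (V 1 * V 2) + V 3 * V 1 * (V 0 ^ 2 + V 1 ^ 2) / 2 := by
  have hρ_near : ∀ᶠ V in 𝓝 (![u, v, p, ρ] : Fin 4 → ℝ), V 3 ≠ 0 :=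
    (continuous_apply 3).continuousAt.eventually_ne hρ
  filter_upwards [hρ_near] with V hV
  have hγ1 : γ - 1 ≠ 0 := sub_ne_zero.mpr hγ
  simp only [Hf, Matrix.cons_val]
  field_simp

theorem DW_eq (hγ : γ ≠ 1) (hρ : ρ ≠ 0) :
    DW γ ![u, v, p, ρ] = !![ρ, 0, 0, u;
      2 * ρ * u, 0, 1, u ^ 2;
      ρ * v, ρ * u, 0, u * v;
      γ * p / (γ - 1) + ρ * (3 * u ^ 2 + v ^ 2) / 2, ρ * u * v, γ * u / (γ - 1),
        u * (u ^ 2 + v ^ 2) / 2] := by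
  ext i j
  fin_cases i <;> fin_cases j <;>
    simp only [DW, of_apply, Fin.reduceFinMk, (Wf_three_eventuallyEq hγ hρ).fderiv_eq] <;>
    simp (disch := fun_prop) [Wf, fderiv_fun_mul, fderiv_fun_add, fderiv_fun_pow,
      fderiv_eval, Pi.single_apply, div_eq_mul_inv] <;> ring

theorem DH_eq (hγ : γ ≠ 1) (hρ : ρ ≠ 0) :
    DH γ ![u, v, p, ρ] = !![0, ρ, 0, v;
      ρ * v, ρ * u, 0, u * v;
      0, 2 * ρ * v, 1, v ^ 2;
      ρ * u * v, γ * p / (γ - 1) + ρ * (u ^ 2 + 3 * v ^ 2) / 2, γ * v / (γ - 1),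
        v * (u ^ 2 + v ^ 2) / 2] := by
  ext i j
  fin_cases i <;> fin_cases j <;>
    simp only [DH, of_apply, Fin.reduceFinMk, (Hf_three_eventuallyEq hγ hρ).fderiv_eq] <;>
    simp (disch := fun_prop) [Hf, fderiv_fun_mul, fderiv_fun_add, fderiv_fun_pow,
      fderiv_eval, Pi.single_apply, div_eq_mul_inv] <;> ring

theorem det_DH_sub_smul_DW (hγ : γ ≠ 1) (hρ : ρ ≠ 0) (σ : ℝ) :
    (DH γ ![u, 0, p, ρ] - σ • DW γ ![u, 0, p, ρ]).det =
      ρ * u ^ 2 * σ ^ 2 * (γ * p - (ρ * u ^ 2 - γ * p) * σ ^ 2) / (γ - 1) := by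
  have hγ1 : γ - 1 ≠ 0 := sub_ne_zero.mpr hγ
  rw [DH_eq hγ hρ, DW_eq hγ hρ, det_succ_row_zero]
  simp [Fin.sum_univ_succ, det_fin_three, Fin.succAbove]
  field_simp
  ring

end Jacobians

theorem det_colMat_eigenbasis (l ρ u c : ℝ) :
    (colMat ![-l, 1, ρ * l * u, ρ * l * u / c ^ 2] ![0, 0, 0, ρ] ![u, 0, 0, 0]
      ![l, 1, -(ρ * l * u), -(ρ * l * u) / c ^ 2]).det = 2 * ρ ^ 2 * l * u ^ 2 := by
  rw [det_succ_row_zero]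
  simp [colMat, Fin.sum_univ_succ, det_fin_three, Fin.succAbove]
  ring

/-- Positivity of the determinant `det(A r̃₄, A r₃, A r₂, A r̃₁)` for
`A = DH(U) - σ DW(U)` at a state `U = (u, 0, p, ρ)` with `u > c` and `λ₁(U) < σ < 0`. -/
theorem det_Ar_positive
    (γ u p ρ σ : ℝ) (hγ : 1 < γ) (hρ : 0 < ρ) (hp : 0 < p)
    (c : ℝ) (hc : c = Real.sqrt (γ * p / ρ)) (hsup : c < u)
    (lam4 : ℝ) (hlam4 : lam4 = c / Real.sqrt (u ^ 2 - c ^ 2))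
    (hσ1 : -lam4 < σ) (hσ2 : σ < 0)
    (U : Fin 4 → ℝ) (hU : U = ![u, 0, p, ρ])
    (A : Matrix (Fin 4) (Fin 4) ℝ) (hA : A = DH γ U - σ • DW γ U) :
    0 < (colMat
        (A.mulVec ![-lam4, 1, ρ * lam4 * u, ρ * lam4 * u / c ^ 2])
        (A.mulVec ![0, 0, 0, ρ])
        (A.mulVec ![u, 0, 0, 0])
        (A.mulVec ![lam4, 1, -(ρ * lam4 * u), -(ρ * lam4 * u) / c ^ 2])).det := by
  subst hU hA
  have hc0 : 0 < c := hc ▸ Real.sqrt_pos.mpr (by positivity)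
  have hc2 : c ^ 2 * ρ = γ * p := by
    rw [hc, Real.sq_sqrt (by positivity)]; field_simp
  have hu0 : 0 < u := hc0.trans hsup
  have huc : 0 < u ^ 2 - c ^ 2 := by nlinarith
  have hlam : 0 < lam4 := hlam4 ▸ div_pos hc0 (Real.sqrt_pos.mpr huc)
  have hlam2 : lam4 ^ 2 * (u ^ 2 - c ^ 2) = c ^ 2 := by
    rw [hlam4, div_pow, Real.sq_sqrt huc.le]; field_simp
  have hsub : (ρ * u ^ 2 - γ * p) * σ ^ 2 < γ * p :=
    calc (ρ * u ^ 2 - γ * p) * σ ^ 2 = ρ * (u ^ 2 - c ^ 2) * σ ^ 2 := by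
          linear_combination σ ^ 2 * hc2
      _ < ρ * (u ^ 2 - c ^ 2) * lam4 ^ 2 :=
          mul_lt_mul_of_pos_left (sq_lt_sq' hσ1 (hσ2.trans hlam)) (by positivity)
      _ = γ * p := by linear_combination ρ * hlam2 + hc2
  rw [colMat_mulVec, det_mul, det_DH_sub_smul_DW hγ.ne' hρ.ne', det_colMat_eigenbasis]
  have hfactor : 0 < γ * p - (ρ * u ^ 2 - γ * p) * σ ^ 2 := by linarith
  have hγ1 : 0 < γ - 1 := by linarith
  have hσ0 : σ ≠ 0 := hσ2.ne
  positivity
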